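/- Let d ≥ 0, let C be a compact Hausdorff abelian topological group, and let A be a torsion-free subgroup of ℝ^d × C that is discrete in the subspace topology and cocompact (the quotient (ℝ^d × C)/A is compact). Then A is a free abelian group of rank d, i.e. A ≅ ℤ^d. -/

import Mathlib

/-!
Since `C` is compact, `Prod.fst` is a proper map, so the projection `π : A → ℝ^d` tends to
infinity along the cofinite filter. Hence `ker π` is finite, thus trivial because `A` is
torsion-free, and the image `L = π(A)` is discrete. As `ℝ^d ⧸ L` is a continuous image of the
compact `(ℝ^d × C) ⧸ A`, no nonzero linear functional vanishes on `L`, so `L` spans `ℝ^d` and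
is a `ℤ`-lattice of rank `d`.
-/

open Filter Function Module

theorem AddSubgroup.tendsto_fst_coe_cofinite_cocompact {X Y : Type*}
    [AddGroup X] [TopologicalSpace X] [IsTopologicalAddGroup X] [T2Space X]
    [AddGroup Y] [TopologicalSpace Y] [IsTopologicalAddGroup Y] [T2Space Y] [CompactSpace Y]
    (A : AddSubgroup (X × Y)) [DiscreteTopology A] :
    Tendsto (fun a : A ↦ (a : X × Y).1) cofinite (cocompact X) := by
  have hA := A.tendsto_coe_cofinite_of_discrete (isDiscrete_iff_discreteTopology.mpr ‹_›)
  refine tendsto_cofinite_cocompact_iff.mpr fun K hK ↦ ?_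
  exact tendsto_cofinite_cocompact_iff.mp hA _
    (isProperMap_fst_of_compactSpace.isCompact_preimage hK)

theorem AddMonoidHom.injective_of_tendsto_cofinite_cocompact {A E : Type*}
    [AddGroup A] [IsAddTorsionFree A] [AddGroup E] [TopologicalSpace E]
    (f : A →+ E) (hf : Tendsto f cofinite (cocompact E)) : Injective f := by
  refine (injective_iff_map_eq_zero f).mpr fun a ha ↦ ?_
  by_contra ha0
  have hfin : (f ⁻¹' {0}).Finite := tendsto_cofinite_cocompact_iff.mp hf _ isCompact_singleton
  refine Set.infinite_of_injective_forall_mem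
    (injective_zsmul_iff_not_isOfFinAddOrder.mpr (not_isOfFinAddOrder_of_isAddTorsionFree ha0))
    (fun n : ℤ ↦ ?_) hfin
  simp [ha]

theorem AddMonoidHom.discreteTopology_range_of_tendsto_cofinite_cocompact {A E : Type*}
    [AddGroup A] [AddGroup E] [TopologicalSpace E] [T1Space E] [WeaklyLocallyCompactSpace E]
    (f : A →+ E) (hf : Tendsto f cofinite (cocompact E)) : DiscreteTopology f.range := by
  refine continuous_subtype_val.discrete_of_tendsto_cofinite_cocompact <|
    tendsto_cofinite_cocompact_iff.mpr fun K hK ↦ ?_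
  refine ((tendsto_cofinite_cocompact_iff.mp hf K hK).image f.rangeRestrict).subset ?_
  rintro ⟨_, a, rfl⟩ ha
  exact ⟨a, ha, rfl⟩

theorem AddSubgroup.compactSpace_of_continuous_surjective_of_le_ker {G H : Type*}
    [AddGroup G] [TopologicalSpace G] [AddGroup H] [TopologicalSpace H]
    {A : AddSubgroup G} [A.Normal] [CompactSpace (G ⧸ A)] (f : G →+ H) (hf : Continuous f)
    (hsurj : Surjective f) (hA : A ≤ f.ker) : CompactSpace H :=
  have hlift : Continuous (QuotientAddGroup.lift A f hA) :=
    (QuotientAddGroup.isQuotientMap_mk A).continuous_iff.mpr hf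
  Surjective.compactSpace hlift fun y ↦ (hsurj y).elim fun x hx ↦ ⟨x, hx⟩

theorem AddSubgroup.span_eq_top_of_compactSpace_quotient {E : Type*} [NormedAddCommGroup E]
    [NormedSpace ℝ E] [FiniteDimensional ℝ E] (L : AddSubgroup E) [CompactSpace (E ⧸ L)] :
    Submodule.span ℝ (L : Set E) = ⊤ := by
  by_contra hL
  obtain ⟨ℓ, hℓ0, hℓL⟩ :=
    (Submodule.span ℝ (L : Set E)).exists_le_ker_of_lt_top (lt_top_iff_ne_top.mpr hL)
  have hsurj : Surjective ℓ := ℓ.surjective_or_eq_zero.resolve_right hℓ0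
  have : CompactSpace ℝ := L.compactSpace_of_continuous_surjective_of_le_ker ℓ.toAddMonoidHom
    ℓ.continuous_of_finiteDimensional hsurj fun x hx ↦ hℓL (Submodule.subset_span hx)
  exact not_compactSpace_iff.mpr inferInstance this

theorem AddSubgroup.nonempty_addEquiv_fin_finrank {E : Type*} [NormedAddCommGroup E]
    [NormedSpace ℝ E] [FiniteDimensional ℝ E] (L : AddSubgroup E) [DiscreteTopology L]
    [CompactSpace (E ⧸ L)] : Nonempty (L ≃+ (Fin (finrank ℝ E) → ℤ)) := by
  let L' : Submodule ℤ E := L.toIntSubmodule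
  have : DiscreteTopology L' := ‹DiscreteTopology L›
  have : IsZLattice ℝ L' := ⟨L.span_eq_top_of_compactSpace_quotient⟩
  have := ZLattice.module_free ℝ L'
  have := ZLattice.module_finite ℝ L'
  exact ⟨(finBasisOfFinrankEq ℤ L' (ZLattice.rank ℝ L')).equivFun.toAddEquiv⟩

/-- **A torsion-free uniform lattice in `ℝ^d × C` is free abelian of rank `d`.**
Let `d ≥ 0`, let `C` be a compact Hausdorff abelian topological group, and let
`A` be a torsion-free discrete cocompact subgroup of `ℝ^d × C`.  Then
`A ≅ ℤ^d`. -/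
theorem uniform_lattice_in_real_times_compact_iso_zpow
    (d : ℕ)
    (C : Type*) [AddCommGroup C] [TopologicalSpace C] [IsTopologicalAddGroup C]
    [CompactSpace C] [T2Space C]
    (A : AddSubgroup ((Fin d → ℝ) × C))
    (hdisc : DiscreteTopology A)
    (hcocompact : CompactSpace (((Fin d → ℝ) × C) ⧸ A))
    (htf : ∀ g : A, g ≠ 0 → ¬IsOfFinAddOrder g) :
    Nonempty (A ≃+ (Fin d → ℤ)) := by
  have : IsAddTorsionFree A := isAddTorsionFree_iff_not_isOfFinAddOrder.mpr htf
  let π : A →+ (Fin d → ℝ) := (AddMonoidHom.fst _ C).comp A.subtype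
  have hπ : Tendsto π cofinite (cocompact _) := A.tendsto_fst_coe_cofinite_cocompact
  have : DiscreteTopology π.range := π.discreteTopology_range_of_tendsto_cofinite_cocompact hπ
  have : CompactSpace ((Fin d → ℝ) ⧸ π.range) := by
    refine A.compactSpace_of_continuous_surjective_of_le_ker
      ((QuotientAddGroup.mk' π.range).comp (AddMonoidHom.fst _ C))
      (continuous_quot_mk.comp continuous_fst)
      ((QuotientAddGroup.mk'_surjective _).comp Prod.fst_surjective) fun a ha ↦ ?_
    exact (QuotientAddGroup.eq_zero_iff _).mpr ⟨⟨a, ha⟩, rfl⟩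
  obtain ⟨e⟩ := π.range.nonempty_addEquiv_fin_finrank
  rw [finrank_fin_fun] at e
  exact ⟨(AddMonoidHom.ofInjective (π.injective_of_tendsto_cofinite_cocompact hπ)).trans e⟩
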